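/- Let A_n be the two-generator Artin group with odd exponent n ≥ 3 and Δ = (aba⋯)_n. With r = ab, s = ab⁻¹, t = a⁻¹b, the word φ(s,t,r) = s⁻¹ · ∏_{i=(n-3)/2}^{0} r⁻ⁱ t⁻¹ rⁱ (product taken with decreasing index i) satisfies b^n = φ(s,t,r) · Δ. Moreover, the total exponent of r in φ is zero. -/

import Mathlib

/-!
Since `n = 2k + 1` is odd, `Δ = (ab)ᵏa`, and the braid relation `Δ = (ba)ᵏb` shows that
conjugation by `Δ` exchanges `a` and `b`: `Δ b = (ab)ᵏ⁺¹ = a Δ`. The product in `φ` telescopes,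
`∏_{i=k-1}^{0} r⁻ⁱ t⁻¹ rⁱ = r⁻ᵏ (r t⁻¹)ᵏ`, and `r t⁻¹ = a²`. Hence
`φ Δ = b a⁻¹ (ab)⁻ᵏ a²ᵏ Δ = b a⁻¹ (ab)⁻ᵏ Δ b²ᵏ = b a⁻¹ a b²ᵏ = bⁿ`.
In the telescoped form `s⁻¹ r⁻ᵏ (r t⁻¹)ᵏ` the exponent of `r` is visibly `-k + k = 0`.
-/

/-- The alternating product `x y x y ⋯` of length `n`. -/
def altG {G : Type*} [Monoid G] : ℕ → G → G → G
  | 0, _, _ => 1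
  | n + 1, x, y => x * altG n y x

lemma map_altG {M N : Type*} [Monoid M] [Monoid N] (f : M →* N) :
    ∀ (n : ℕ) (x y : M), f (altG n x y) = altG n (f x) (f y)
  | 0, _, _ => by simp [altG]
  | n + 1, x, y => by simp [altG, map_altG f n]

/-- The braid relation of the two-generator Artin group with exponent `n`. -/
def braidRels (n : ℕ) : Set (FreeGroup Bool) :=
  {altG n (FreeGroup.of true) (FreeGroup.of false) *
    (altG n (FreeGroup.of false) (FreeGroup.of true))⁻¹}

/-- The two-generator Artin group `A_n`. -/
abbrev ArtinTwo (n : ℕ) := PresentedGroup (braidRels n)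

/-- The generator `a`. -/
def artinA (n : ℕ) : ArtinTwo n := PresentedGroup.of true

/-- The generator `b`. -/
def artinB (n : ℕ) : ArtinTwo n := PresentedGroup.of false

/-- The Garside element `Δ = (aba⋯)_n`. -/
def artinDelta (n : ℕ) : ArtinTwo n := altG n (artinA n) (artinB n)

/-- The homomorphism `A_n → ℤ/2` sending both generators to `1`. -/
def toZ2 (n : ℕ) : ArtinTwo n →* Multiplicative (ZMod 2) :=
  PresentedGroup.toGroup (f := fun _ => Multiplicative.ofAdd 1) (by
    intro r hr
    simp only [braidRels, Set.mem_singleton_iff] at hr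
    subst hr
    simp [map_altG])

/-- The index-two subgroup `A_n'` of even-length words. -/
def AnPrime (n : ℕ) : Subgroup (ArtinTwo n) := (toZ2 n).ker

/-- The word `φ(s,t,r) = s⁻¹ ∏_{i=(n-3)/2}^{0} r⁻ⁱ t⁻¹ rⁱ` (decreasing index), as an element
of the free group on the letters `0 ↦ s`, `1 ↦ t`, `2 ↦ r`. -/
def phiWord (n : ℕ) : FreeGroup (Fin 3) :=
  (FreeGroup.of 0)⁻¹ *
    (((List.range ((n - 1) / 2)).reverse.map
      (fun i => (FreeGroup.of 2 ^ i)⁻¹ * (FreeGroup.of 1)⁻¹ * FreeGroup.of 2 ^ i)).prod)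

/-- Evaluation of words in `s, t, r` in the Artin group `A_n`, where
`s = ab⁻¹`, `t = a⁻¹b`, `r = ab`. -/
def evalSTR (n : ℕ) : FreeGroup (Fin 3) →* ArtinTwo n :=
  FreeGroup.lift
    ![artinA n * (artinB n)⁻¹, (artinA n)⁻¹ * artinB n, artinA n * artinB n]

/-- The total exponent of the letter `r` in a word in `s, t, r`. -/
def expR : FreeGroup (Fin 3) →* Multiplicative ℤ :=
  FreeGroup.lift (fun i => Multiplicative.ofAdd (if i = 2 then (1 : ℤ) else 0))

lemma altG_two_mul_add_one {M : Type*} [Monoid M] (x y : M) :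
    ∀ k : ℕ, altG (2 * k + 1) x y = (x * y) ^ k * x
  | 0 => by simp [altG]
  | k + 1 => by
    rw [show 2 * (k + 1) + 1 = 2 * k + 1 + 2 by ring, altG, altG,
      altG_two_mul_add_one x y k, pow_succ', mul_assoc, mul_assoc]

lemma altG_mul_eq_mul_altG_of_odd {M : Type*} [Monoid M] {n : ℕ} (hn : Odd n) {x y : M}
    (h : altG n x y = altG n y x) : altG n x y * y = x * altG n x y := by
  obtain ⟨k, rfl⟩ := hn
  calc altG (2 * k + 1) x y * y = (x * y) ^ k * x * y := by rw [altG_two_mul_add_one]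
    _ = x * ((y * x) ^ k * y) := by rw [mul_pow_mul, mul_assoc]
    _ = x * altG (2 * k + 1) x y := by rw [h, altG_two_mul_add_one]

lemma list_prod_map_conj_pow_range {G : Type*} [Group G] (r x : G) :
    ∀ m : ℕ, ((List.range m).reverse.map (fun i => (r ^ i)⁻¹ * x * r ^ i)).prod =
      (r ^ m)⁻¹ * (r * x) ^ m
  | 0 => by simp
  | m + 1 => by
    rw [List.range_succ, List.reverse_append, List.map_append, List.prod_append,
      list_prod_map_conj_pow_range r x m]
    simp only [List.reverse_singleton, List.map_singleton, List.prod_singleton, pow_succ',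
      mul_inv_rev, mul_assoc, inv_mul_cancel_left, mul_inv_cancel_left]

lemma phiWord_eq (n : ℕ) :
    phiWord n = (FreeGroup.of 0)⁻¹ * (FreeGroup.of 2 ^ ((n - 1) / 2))⁻¹ *
      (FreeGroup.of 2 * (FreeGroup.of 1)⁻¹) ^ ((n - 1) / 2) := by
  rw [phiWord, list_prod_map_conj_pow_range, mul_assoc]

lemma altG_artinA_artinB (n : ℕ) :
    altG n (artinA n) (artinB n) = altG n (artinB n) (artinA n) := by
  have h : PresentedGroup.mk (braidRels n)
      (altG n (FreeGroup.of true) (FreeGroup.of false) *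
        (altG n (FreeGroup.of false) (FreeGroup.of true))⁻¹) = 1 :=
    (QuotientGroup.eq_one_iff _).2 (Subgroup.subset_normalClosure rfl)
  rwa [map_mul, map_inv, map_altG, map_altG, mul_inv_eq_one] at h

lemma artinDelta_mul_artinB {n : ℕ} (hn : Odd n) :
    artinDelta n * artinB n = artinA n * artinDelta n :=
  altG_mul_eq_mul_altG_of_odd hn (altG_artinA_artinB n)

theorem artin_odd_bn_formula_general (n : ℕ) (hodd : Odd n) :
    (artinB n) ^ n = evalSTR n (phiWord n) * artinDelta n ∧
      Multiplicative.toAdd (expR (phiWord n)) = 0 := by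
  have hΔb := artinDelta_mul_artinB hodd
  obtain ⟨k, rfl⟩ := hodd
  rw [phiWord_eq, show (2 * k + 1 - 1) / 2 = k by omega]
  refine ⟨?_, by simp [expR]⟩
  simp only [evalSTR, map_mul, map_inv, map_pow, FreeGroup.lift_apply_of]
  set a := artinA (2 * k + 1)
  set b := artinB (2 * k + 1)
  set Δ := artinDelta (2 * k + 1)
  have hΔ : Δ = (a * b) ^ k * a := altG_two_mul_add_one a b k
  have hswap : Δ * b ^ (2 * k) = (a * a) ^ k * Δ := by
    rw [← sq, ← pow_mul]
    exact (SemiconjBy.pow_right hΔb (2 * k) :)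
  calc b ^ (2 * k + 1) = b * a⁻¹ * ((a * b) ^ k)⁻¹ * (Δ * b ^ (2 * k)) := by rw [hΔ]; group
    _ = _ := by rw [hswap]; simp [mul_assoc]

/-- for odd `n`, `b^n = φ(s,t,r) Δ` and the total exponent of `r` in `φ` is zero. -/
theorem artin_odd_bn_formula (n : ℕ) (hodd : Odd n) (hn : 3 ≤ n) :
    (artinB n) ^ n = evalSTR n (phiWord n) * artinDelta n ∧
      Multiplicative.toAdd (expR (phiWord n)) = 0 :=
  artin_odd_bn_formula_general n hodd
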